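/- arXiv:1709.09681 — 5 statements merged into one kernel-verified Lean document; each statement's English description precedes it below -/
import Mathlib

section
/- Let n ≥ 2 and let K be a symmetric n×n real matrix with zero diagonal (K_{ij} = K_{ji} and K_{ii} = 0) whose entries are all nonnegative (K_{ij} ≥ 0). Define λ_i := Σ_j K_{ij}. Then Σ_i λ_i³ ≥ Σ_{i,j} K_{ij} λ_i λ_j. -/
open Finset

theorem cpe_sectional_inequality (n : ℕ) (hn : 2 ≤ n) (K : Fin n → Fin n → ℝ)
    (hsymm : ∀ i j, K i j = K j i) (hdiag : ∀ i, K i i = 0)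
    (hnonneg : ∀ i j, 0 ≤ K i j) :
    (∑ i, ∑ j, K i j * (∑ p, K i p) * (∑ p, K j p)) ≤ ∑ i, (∑ j, K i j) ^ 3 := by
  set lam : Fin n → ℝ := fun i => ∑ p, K i p with hlam
  have h1 : ∑ i, (∑ j, K i j) ^ 3 = ∑ i, ∑ j, K i j * (lam i) ^ 2 := by
    refine Finset.sum_congr rfl fun i _ => ?_
    rw [← Finset.sum_mul]
    show (lam i) ^ 3 = lam i * lam i ^ 2
    ring
  have h2 : ∑ i, ∑ j, K i j * (lam j) ^ 2 = ∑ i, ∑ j, K i j * (lam i) ^ 2 := by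
    rw [Finset.sum_comm]
    exact Finset.sum_congr rfl fun i _ => Finset.sum_congr rfl fun j _ => by rw [hsymm]
  have h3 : (0:ℝ) ≤ ∑ i, ∑ j, K i j * (lam i - lam j) ^ 2 :=
    Finset.sum_nonneg fun i _ => Finset.sum_nonneg fun j _ =>
      mul_nonneg (hnonneg i j) (sq_nonneg _)
  have h4 : ∑ i, ∑ j, K i j * (lam i - lam j) ^ 2 =
      ∑ i, ∑ j, K i j * (lam i) ^ 2 + ∑ i, ∑ j, K i j * (lam j) ^ 2
        - 2 * ∑ i, ∑ j, K i j * lam i * lam j := by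
    rw [← Finset.sum_add_distrib, Finset.mul_sum, ← Finset.sum_sub_distrib]
    refine Finset.sum_congr rfl fun i _ => ?_
    rw [← Finset.sum_add_distrib, Finset.mul_sum, ← Finset.sum_sub_distrib]
    exact Finset.sum_congr rfl fun j _ => by ring
  rw [h1]
  linarith [h3, h4, h2]
end

section
/- Let n ≥ 2 and let Rm be a 4-tensor on ℝⁿ (components Rm_{ijkl}, indices in {1,…,n}) satisfying Rm_{ijkl} = −Rm_{jikl} = −Rm_{ijlk} and Rm_{ijkl} = Rm_{klij}. Suppose Rm has nonnegative sectional curvature in the sense that Σ_{i,j,k,l} Rm_{ijkl} u_i v_j u_k v_l ≥ 0 for all vectors u, v ∈ ℝⁿ. Define the Ricci contraction Ric_{jl} := Σ_i Rm_{ijil}. Then Σ_{i,j,k} Ric_{ij} Ric_{ik} Ric_{jk} ≥ Σ_{i,j,k,l} Rm_{ijkl} Ric_{ik} Ric_{jl}. -/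
/-!
Diagonalize `Ric` in an orthonormal eigenbasis `e_a` with eigenvalues `λ_a`, and let
`K a b = Rm(e_a, e_b, e_a, e_b) ≥ 0` be the sectional curvatures of the coordinate planes.
Expanding `Ric = ∑ λ_a e_a e_aᵀ`, `Ric² = ∑ λ_a² e_a e_aᵀ` and `1 = ∑ e_a e_aᵀ` in the
bilinear pairing `⟨S, T⟩ = ∑ Rm_ijkl S_ik T_jl` gives `⟨Ric, Ric⟩ = ∑ λ_a λ_b K a b` and
`tr Ric³ = ⟨Ric², 1⟩ = ∑ λ_a² K a b`. As `K` is symmetric, the difference is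
`½ ∑ (λ_a - λ_b)² K a b ≥ 0`.
-/

open Finset Matrix

variable {ι : Type*} [Fintype ι]

def curvaturePairing (Rm : ι → ι → ι → ι → ℝ) :
    Matrix ι ι ℝ →ₗ[ℝ] Matrix ι ι ℝ →ₗ[ℝ] ℝ :=
  LinearMap.mk₂ ℝ (fun S T => ∑ i, ∑ j, ∑ k, ∑ l, Rm i j k l * S i k * T j l)
    (fun S S' T => by simp only [Matrix.add_apply, mul_add, add_mul, sum_add_distrib])
    (fun c S T => by
      simp only [Matrix.smul_apply, smul_eq_mul, mul_sum, mul_comm, mul_left_comm])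
    (fun S T T' => by simp only [Matrix.add_apply, mul_add, sum_add_distrib])
    (fun c S T => by
      simp only [Matrix.smul_apply, smul_eq_mul, mul_sum, mul_comm, mul_left_comm])

def ricci (Rm : ι → ι → ι → ι → ℝ) : Matrix ι ι ℝ :=
  Matrix.of fun i k => ∑ p, Rm p i p k

theorem Matrix.IsHermitian.sum_vecMulVec_eigenvectorBasis [DecidableEq ι]
    {A : Matrix ι ι ℝ} (hA : A.IsHermitian) :
    ∑ a, vecMulVec ⇑(hA.eigenvectorBasis a) ⇑(hA.eigenvectorBasis a) = 1 := by
  rw [← Unitary.coe_mul_star_self hA.eigenvectorUnitary]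
  ext i j
  simp [mul_apply, vecMulVec_apply, sum_apply]

theorem pow_eq_sum_smul_vecMulVec [DecidableEq ι] {A : Matrix ι ι ℝ} {e : ι → ι → ℝ}
    {μ : ι → ℝ} (he : ∑ a, vecMulVec (e a) (e a) = 1) (hAe : ∀ a, A *ᵥ e a = μ a • e a)
    (m : ℕ) :
    A ^ m = ∑ a, μ a ^ m • vecMulVec (e a) (e a) := by
  induction m with
  | zero => simpa using he.symm
  | succ m ih =>
    simp only [pow_succ', ih, mul_sum, mul_smul_comm, mul_vecMulVec, hAe, smul_vecMulVec,
      smul_smul, ← pow_succ]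

theorem sum_mul_mul_le_sum_sq_mul (K : ι → ι → ℝ) (x : ι → ℝ) (hK : ∀ a b, 0 ≤ K a b)
    (hKsymm : ∀ a b, K a b = K b a) :
    ∑ a, ∑ b, x a * x b * K a b ≤ ∑ a, ∑ b, x a ^ 2 * K a b := by
  have hswap : ∑ a, ∑ b, x b ^ 2 * K a b = ∑ a, ∑ b, x a ^ 2 * K a b := by
    rw [sum_comm]
    simp only [hKsymm]
  have hsq : 0 ≤ ∑ a, ∑ b, (x a - x b) ^ 2 * K a b :=
    sum_nonneg fun a _ => sum_nonneg fun b _ => mul_nonneg (sq_nonneg _) (hK a b)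
  have hexpand : ∑ a, ∑ b, (x a - x b) ^ 2 * K a b =
      ∑ a, ∑ b, x a ^ 2 * K a b + ∑ a, ∑ b, x b ^ 2 * K a b
        - 2 * ∑ a, ∑ b, x a * x b * K a b := by
    simp only [mul_sum, ← sum_add_distrib, ← sum_sub_distrib]
    exact sum_congr rfl fun a _ => sum_congr rfl fun b _ => by ring
  linarith

section CurvatureTensor

variable {Rm : ι → ι → ι → ι → ℝ}

theorem curvaturePairing_apply (S T : Matrix ι ι ℝ) :
    curvaturePairing Rm S T = ∑ i, ∑ j, ∑ k, ∑ l, Rm i j k l * S i k * T j l := rfl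

theorem curvaturePairing_vecMulVec (u v : ι → ℝ) :
    curvaturePairing Rm (vecMulVec u u) (vecMulVec v v) =
      ∑ i, ∑ j, ∑ k, ∑ l, Rm i j k l * u i * v j * u k * v l := by
  simp only [curvaturePairing_apply, vecMulVec_apply]
  exact sum_congr rfl fun i _ => sum_congr rfl fun j _ => sum_congr rfl fun k _ =>
    sum_congr rfl fun l _ => by ring

theorem curvaturePairing_comm (hanti1 : ∀ i j k l, Rm i j k l = -Rm j i k l)
    (hanti2 : ∀ i j k l, Rm i j k l = -Rm i j l k) (S T : Matrix ι ι ℝ) :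
    curvaturePairing Rm S T = curvaturePairing Rm T S := by
  simp only [curvaturePairing_apply]
  rw [sum_comm]
  refine sum_congr rfl fun i _ => sum_congr rfl fun j _ => ?_
  rw [sum_comm]
  refine sum_congr rfl fun k _ => sum_congr rfl fun l _ => ?_
  rw [hanti1, hanti2]
  ring

theorem curvaturePairing_one_right [DecidableEq ι]
    (hanti1 : ∀ i j k l, Rm i j k l = -Rm j i k l)
    (hanti2 : ∀ i j k l, Rm i j k l = -Rm i j l k) (S : Matrix ι ι ℝ) :
    curvaturePairing Rm S 1 = ∑ i, ∑ k, S i k * ricci Rm i k := by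
  simp only [curvaturePairing_apply, one_apply, mul_ite, mul_one, mul_zero, sum_ite_eq,
    mem_univ, if_true]
  refine sum_congr rfl fun i _ => ?_
  rw [sum_comm]
  refine sum_congr rfl fun k _ => ?_
  rw [ricci, of_apply, mul_sum]
  refine sum_congr rfl fun j _ => ?_
  rw [hanti1, hanti2 j]
  ring

theorem curvaturePairing_self_le_sq_one [DecidableEq ι]
    (hanti1 : ∀ i j k l, Rm i j k l = -Rm j i k l)
    (hanti2 : ∀ i j k l, Rm i j k l = -Rm i j l k)
    (hsec : ∀ u v, 0 ≤ curvaturePairing Rm (vecMulVec u u) (vecMulVec v v))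
    {S : Matrix ι ι ℝ} (hS : S.IsHermitian) :
    curvaturePairing Rm S S ≤ curvaturePairing Rm (S ^ 2) 1 := by
  set μ := hS.eigenvalues
  set P : ι → Matrix ι ι ℝ :=
    fun a => vecMulVec ⇑(hS.eigenvectorBasis a) ⇑(hS.eigenvectorBasis a)
  have hS_pow (m : ℕ) : S ^ m = ∑ a, μ a ^ m • P a :=
    pow_eq_sum_smul_vecMulVec hS.sum_vecMulVec_eigenvectorBasis hS.mulVec_eigenvectorBasis m
  have hS_eq : S = ∑ a, μ a • P a := by simpa using hS_pow 1
  have hone : (1 : Matrix ι ι ℝ) = ∑ b, P b := hS.sum_vecMulVec_eigenvectorBasis.symm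
  calc curvaturePairing Rm S S
      = ∑ a, ∑ b, μ a * μ b * curvaturePairing Rm (P a) (P b) := by
        rw [hS_eq, LinearMap.map_sum₂]
        simp only [map_sum, map_smul, LinearMap.smul_apply, smul_eq_mul]
        exact sum_congr rfl fun a _ => sum_congr rfl fun b _ => by ring
    _ ≤ ∑ a, ∑ b, μ a ^ 2 * curvaturePairing Rm (P a) (P b) :=
        sum_mul_mul_le_sum_sq_mul _ _ (fun a b => hsec _ _)
          (fun a b => curvaturePairing_comm hanti1 hanti2 _ _)
    _ = curvaturePairing Rm (S ^ 2) 1 := by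
        rw [hS_pow, hone, LinearMap.map_sum₂]
        simp only [LinearMap.map_smul₂, map_sum, smul_eq_mul]

theorem ricci_isHermitian (hpair : ∀ i j k l, Rm i j k l = Rm k l i j) :
    (ricci Rm).IsHermitian :=
  isHermitian_iff_isSymm.mpr <| IsSymm.ext fun i k => sum_congr rfl fun p _ => hpair p k p i

theorem curvaturePairing_sq_ricci_one [DecidableEq ι]
    (hanti1 : ∀ i j k l, Rm i j k l = -Rm j i k l)
    (hanti2 : ∀ i j k l, Rm i j k l = -Rm i j l k) :
    curvaturePairing Rm (ricci Rm ^ 2) 1 =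
      ∑ i, ∑ j, ∑ k, ricci Rm i j * ricci Rm i k * ricci Rm j k := by
  rw [curvaturePairing_one_right hanti1 hanti2]
  refine sum_congr rfl fun i _ => ?_
  simp only [sq, mul_apply, sum_mul]
  rw [sum_comm]
  exact sum_congr rfl fun j _ => sum_congr rfl fun k _ => by ring

end CurvatureTensor

theorem cpe_ricci_cubic_estimate_general (n : ℕ)
    (Rm : Fin n → Fin n → Fin n → Fin n → ℝ)
    (hanti1 : ∀ i j k l, Rm i j k l = -Rm j i k l)
    (hanti2 : ∀ i j k l, Rm i j k l = -Rm i j l k)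
    (hpair : ∀ i j k l, Rm i j k l = Rm k l i j)
    (hsec : ∀ u v : Fin n → ℝ,
      0 ≤ ∑ i, ∑ j, ∑ k, ∑ l, Rm i j k l * u i * v j * u k * v l) :
    (∑ i, ∑ j, ∑ k, ∑ l,
        Rm i j k l * (∑ p, Rm p i p k) * (∑ p, Rm p j p l)) ≤
      ∑ i, ∑ j, ∑ k,
        (∑ p, Rm p i p j) * (∑ p, Rm p i p k) * (∑ p, Rm p j p k) := by
  have key := curvaturePairing_self_le_sq_one hanti1 hanti2
    (fun u v => (curvaturePairing_vecMulVec u v).symm ▸ hsec u v) (ricci_isHermitian hpair)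
  rwa [curvaturePairing_sq_ricci_one hanti1 hanti2] at key

theorem cpe_ricci_cubic_estimate (n : ℕ) (hn : 2 ≤ n)
    (Rm : Fin n → Fin n → Fin n → Fin n → ℝ)
    (hanti1 : ∀ i j k l, Rm i j k l = -Rm j i k l)
    (hanti2 : ∀ i j k l, Rm i j k l = -Rm i j l k)
    (hpair : ∀ i j k l, Rm i j k l = Rm k l i j)
    (hsec : ∀ u v : Fin n → ℝ,
      0 ≤ ∑ i, ∑ j, ∑ k, ∑ l, Rm i j k l * u i * v j * u k * v l) :
    (∑ i, ∑ j, ∑ k, ∑ l,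
        Rm i j k l * (∑ p, Rm p i p k) * (∑ p, Rm p j p l)) ≤
      ∑ i, ∑ j, ∑ k,
        (∑ p, Rm p i p j) * (∑ p, Rm p i p k) * (∑ p, Rm p j p k) :=
  cpe_ricci_cubic_estimate_general n Rm hanti1 hanti2 hpair hsec
end

section
/- Let n ≥ 3 and let B be a symmetric trace-free n×n real matrix (tr B = 0). With V := −(2/(n−2)) (B²⊼δ) + (2/(n(n−2))) |B|² (δ⊼δ), U := −(1/(n(n−1))) |B|² (δ⊼δ) and T := B⊼B − V − U, one has |T|² + (n/2)|V|² = (8(n−2)/(n−1)) |B|⁴, where |P|² := Σ_{i,j,k,l} P_{ijkl}² for a 4-tensor P and |B|² := Σ_{i,j} B_{ij}². -/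
open Finset

/-- The Kulkarni–Nomizu product of two `n × n` real matrices. -/
def KN {n : ℕ} (S T : Fin n → Fin n → ℝ) : Fin n → Fin n → Fin n → Fin n → ℝ :=
  fun i j k l => S i k * T j l + S j l * T i k - S i l * T j k - S j k * T i l

/-- The `n × n` identity matrix. -/
def delta (n : ℕ) : Fin n → Fin n → ℝ := fun i j => if i = j then 1 else 0

/-- The matrix square `B² = BB`. -/
def matSq {n : ℕ} (B : Fin n → Fin n → ℝ) : Fin n → Fin n → ℝ :=
  fun i j => ∑ k, B i k * B k j

/-- Squared norm of an `n × n` matrix. -/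
def normSq2 {n : ℕ} (B : Fin n → Fin n → ℝ) : ℝ := ∑ i, ∑ j, B i j ^ 2

/-- Squared norm of a 4-tensor. -/
def normSq4 {n : ℕ} (P : Fin n → Fin n → Fin n → Fin n → ℝ) : ℝ :=
  ∑ i, ∑ j, ∑ k, ∑ l, P i j k l ^ 2

lemma sum_ite_const {n : ℕ} {p : Prop} [Decidable p] (f : Fin n → ℝ) :
    (∑ x, if p then f x else 0) = if p then ∑ x, f x else 0 := by
  split <;> simp

lemma sum3_swap12 {n : ℕ} (f : Fin n → Fin n → Fin n → ℝ) :
    (∑ x, ∑ y, ∑ z, f x y z) = ∑ x, ∑ y, ∑ z, f y x z :=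
  Finset.sum_comm

lemma sum3_swap23 {n : ℕ} (f : Fin n → Fin n → Fin n → ℝ) :
    (∑ x, ∑ y, ∑ z, f x y z) = ∑ x, ∑ y, ∑ z, f x z y :=
  Finset.sum_congr rfl fun _ _ => Finset.sum_comm

lemma sum3_tr {n : ℕ} (B : Fin n → Fin n → ℝ) (htr : ∑ i, B i i = 0)
    (g : Fin n → Fin n → ℝ) (f : Fin n → Fin n → Fin n → ℝ)
    (hf : ∀ x y z, f x y z = B y y * g x z) :
    (∑ x, ∑ y, ∑ z, f x y z) = 0 := by
  have h1 : ∀ x, (∑ y, ∑ z, f x y z) = (∑ y, B y y) * (∑ z, g x z) := by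
    intro x
    rw [Finset.sum_mul_sum]
    exact Finset.sum_congr rfl fun y _ => Finset.sum_congr rfl fun z _ => hf x y z
  simp [h1, htr]

lemma sum3_tr' {n : ℕ} (B : Fin n → Fin n → ℝ) (htr : ∑ i, B i i = 0)
    (g : Fin n → Fin n → ℝ) (f : Fin n → Fin n → Fin n → ℝ)
    (hf : ∀ x y z, f x y z = B x x * g y z) :
    (∑ x, ∑ y, ∑ z, f x y z) = 0 := by
  have h1 : ∀ x, (∑ y, ∑ z, f x y z) = B x x * (∑ y, ∑ z, g y z) := by
    intro x
    simp only [Finset.mul_sum]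
    exact Finset.sum_congr rfl fun y _ => Finset.sum_congr rfl fun z _ => hf x y z
  calc (∑ x, ∑ y, ∑ z, f x y z) = ∑ x, B x x * (∑ y, ∑ z, g y z) :=
        Finset.sum_congr rfl fun x _ => h1 x
    _ = (∑ x, B x x) * (∑ y, ∑ z, g y z) := by rw [Finset.sum_mul]
    _ = 0 := by rw [htr, zero_mul]

lemma sum3_D {n : ℕ} (B A : Fin n → Fin n → ℝ) (f : Fin n → Fin n → Fin n → ℝ)
    (hf : ∀ a b c, f a b c = A a b * (B a c * B c b)) :
    (∑ a, ∑ b, ∑ c, f a b c) = ∑ x, ∑ y, A x y * ∑ k, B x k * B k y := by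
  refine Finset.sum_congr rfl fun a _ => Finset.sum_congr rfl fun b _ => ?_
  rw [Finset.mul_sum]
  exact Finset.sum_congr rfl fun c _ => hf a b c

lemma sum4_factor_kl {n : ℕ} (f g : Fin n → Fin n → ℝ) :
    (∑ i, ∑ j, ∑ k, ∑ l, f i k * g j l) = (∑ i, ∑ j, f i j) * (∑ i, ∑ j, g i j) := by
  rw [Finset.sum_mul_sum]
  refine Finset.sum_congr rfl fun i _ => Finset.sum_congr rfl fun j _ => ?_
  rw [Finset.sum_mul_sum]

lemma sum4_factor_lk {n : ℕ} (f g : Fin n → Fin n → ℝ) :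
    (∑ i, ∑ j, ∑ k, ∑ l, f i l * g j k) = (∑ i, ∑ j, g i j) * (∑ i, ∑ j, f i j) := by
  calc (∑ i, ∑ j, ∑ k, ∑ l, f i l * g j k)
      = ∑ j, ∑ i, ∑ k, ∑ l, f i l * g j k := Finset.sum_comm
    _ = (∑ i, ∑ j, g i j) * (∑ i, ∑ j, f i j) := by
        rw [Finset.sum_mul_sum]
        refine Finset.sum_congr rfl fun j _ => Finset.sum_congr rfl fun i _ => ?_
        rw [Finset.sum_mul_sum]
        exact Finset.sum_congr rfl fun k _ => Finset.sum_congr rfl fun l _ => by ring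

lemma sum4_cross {n : ℕ} (B : Fin n → Fin n → ℝ) :
    (∑ i, ∑ j, ∑ k, ∑ l, B i k * B j l * (B i l * B j k)) =
      ∑ k, ∑ l, (∑ i, B i k * B i l) * (∑ j, B j l * B j k) := by
  calc (∑ i, ∑ j, ∑ k, ∑ l, B i k * B j l * (B i l * B j k))
      = ∑ i, ∑ k, ∑ j, ∑ l, B i k * B j l * (B i l * B j k) :=
        Finset.sum_congr rfl fun i _ => Finset.sum_comm
    _ = ∑ k, ∑ i, ∑ j, ∑ l, B i k * B j l * (B i l * B j k) := Finset.sum_comm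
    _ = ∑ k, ∑ i, ∑ l, ∑ j, B i k * B j l * (B i l * B j k) :=
        Finset.sum_congr rfl fun k _ => Finset.sum_congr rfl fun i _ => Finset.sum_comm
    _ = ∑ k, ∑ l, ∑ i, ∑ j, B i k * B j l * (B i l * B j k) :=
        Finset.sum_congr rfl fun k _ => Finset.sum_comm
    _ = ∑ k, ∑ l, (∑ i, B i k * B i l) * (∑ j, B j l * B j k) := by
        refine Finset.sum_congr rfl fun k _ => Finset.sum_congr rfl fun l _ => ?_
        rw [Finset.sum_mul_sum]
        exact Finset.sum_congr rfl fun i _ => Finset.sum_congr rfl fun j _ => by ring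

lemma lemA {n : ℕ} (S S' : Fin n → Fin n → ℝ) :
    (∑ i, ∑ j, ∑ k, ∑ l, KN S (delta n) i j k l * KN S' (delta n) i j k l) =
      4 * ((n : ℝ) - 2) * (∑ i, ∑ j, S i j * S' i j) + 4 * (∑ i, S i i) * (∑ j, S' j j) := by
  simp only [KN, delta]
  simp only [mul_ite, ite_mul, mul_one, one_mul, mul_zero, zero_mul,
    add_mul, mul_add, sub_mul, mul_sub, Finset.sum_add_distrib, Finset.sum_sub_distrib,
    sum_ite_const, Finset.sum_ite_eq, Finset.sum_ite_eq', Finset.mem_univ, if_true,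
    Finset.sum_const, Finset.card_univ, Fintype.card_fin, nsmul_eq_mul]
  rw [Finset.sum_comm (s := univ) (t := univ) (f := fun x x_1 => S x_1 x * S' x_1 x)]
  simp only [← Finset.mul_sum, ← Finset.sum_mul]
  ring

lemma lemB {n : ℕ} (B A : Fin n → Fin n → ℝ) (htr : ∑ i, B i i = 0) :
    (∑ i, ∑ j, ∑ k, ∑ l, KN B B i j k l * KN A (delta n) i j k l) =
      -8 * (∑ i, ∑ j, A i j * matSq B i j) := by
  simp only [KN, delta, matSq]
  simp only [mul_ite, ite_mul, mul_one, one_mul, mul_zero, zero_mul,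
    add_mul, mul_add, sub_mul, mul_sub, Finset.sum_add_distrib, Finset.sum_sub_distrib,
    sum_ite_const, Finset.sum_ite_eq, Finset.sum_ite_eq', Finset.mem_univ, if_true,
    Finset.sum_const, Finset.card_univ, Fintype.card_fin, nsmul_eq_mul]
  have e1 : (∑ x : Fin n, ∑ x1 : Fin n, ∑ x2 : Fin n, B x x2 * B x1 x1 * A x x2) = 0 :=
    sum3_tr B htr (fun x z => B x z * A x z) _ (fun x y z => by ring)
  have e2 : (∑ x : Fin n, ∑ x1 : Fin n, ∑ x2 : Fin n, B x1 x1 * B x x2 * A x x2) = 0 :=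
    sum3_tr B htr (fun x z => B x z * A x z) _ (fun x y z => by ring)
  have e5 : (∑ x : Fin n, ∑ x1 : Fin n, ∑ x2 : Fin n, B x x * B x1 x2 * A x1 x2) = 0 :=
    sum3_tr' B htr (fun y z => B y z * A y z) _ (fun x y z => by ring)
  have e6 : (∑ x : Fin n, ∑ x1 : Fin n, ∑ x2 : Fin n, B x1 x2 * B x x * A x1 x2) = 0 :=
    sum3_tr' B htr (fun y z => B y z * A y z) _ (fun x y z => by ring)
  have e3 : (∑ x : Fin n, ∑ x1 : Fin n, ∑ x2 : Fin n, B x x1 * B x1 x2 * A x x2) =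
      ∑ x, ∑ y, A x y * ∑ k, B x k * B k y :=
    (sum3_swap23 (fun x y z => B x y * B y z * A x z)).trans
      (sum3_D B A _ (fun a b c => by ring))
  have e4 : (∑ x : Fin n, ∑ x1 : Fin n, ∑ x2 : Fin n, B x1 x2 * B x x1 * A x x2) =
      ∑ x, ∑ y, A x y * ∑ k, B x k * B k y :=
    (sum3_swap23 (fun x y z => B y z * B x y * A x z)).trans
      (sum3_D B A _ (fun a b c => by ring))
  have e7 : (∑ x : Fin n, ∑ x1 : Fin n, ∑ x2 : Fin n, B x x2 * B x1 x * A x1 x2) =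
      ∑ x, ∑ y, A x y * ∑ k, B x k * B k y :=
    ((sum3_swap12 (fun x y z => B x z * B y x * A y z)).trans
      (sum3_swap23 (fun x y z => B y z * B x y * A x z))).trans
      (sum3_D B A _ (fun a b c => by ring))
  have e8 : (∑ x : Fin n, ∑ x1 : Fin n, ∑ x2 : Fin n, B x1 x * B x x2 * A x1 x2) =
      ∑ x, ∑ y, A x y * ∑ k, B x k * B k y :=
    ((sum3_swap12 (fun x y z => B y x * B x z * A y z)).trans
      (sum3_swap23 (fun x y z => B x y * B y z * A x z))).trans
      (sum3_D B A _ (fun a b c => by ring))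
  linear_combination 2 * e1 + 2 * e2 - 2 * e3 - 2 * e4 + 2 * e5 + 2 * e6 - 2 * e7 - 2 * e8

lemma lemC {n : ℕ} (B : Fin n → Fin n → ℝ) (hB : ∀ i j, B i j = B j i) :
    (∑ i, ∑ j, ∑ k, ∑ l, KN B B i j k l * KN B B i j k l) =
      8 * ((∑ i, ∑ j, B i j * B i j) ^ 2 - ∑ i, ∑ j, matSq B i j * matSq B i j) := by
  have hpt : ∀ i j k l : Fin n, KN B B i j k l * KN B B i j k l =
      4 * (B i k * B i k * (B j l * B j l)) - 8 * (B i k * B j l * (B i l * B j k)) +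
        4 * (B i l * B i l * (B j k * B j k)) := by
    intro i j k l; simp only [KN]; ring
  have hQ : (∑ k, ∑ l, (∑ i, B i k * B i l) * (∑ j, B j l * B j k)) =
      ∑ i, ∑ j, matSq B i j * matSq B i j := by
    refine Finset.sum_congr rfl fun k _ => Finset.sum_congr rfl fun l _ => ?_
    have h1 : (∑ i, B i k * B i l) = matSq B k l :=
      Finset.sum_congr rfl fun i _ => by rw [hB i k]
    have h2 : (∑ j, B j l * B j k) = matSq B k l := by
      have h3 : (∑ j, B j l * B j k) = matSq B l k :=
        Finset.sum_congr rfl fun j _ => by rw [hB j l]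
      rw [h3]
      exact Finset.sum_congr rfl fun c _ => by rw [hB l c, hB c k]; ring
    rw [h1, h2]
  calc (∑ i, ∑ j, ∑ k, ∑ l, KN B B i j k l * KN B B i j k l)
      = ∑ i, ∑ j, ∑ k, ∑ l, (4 * (B i k * B i k * (B j l * B j l)) -
          8 * (B i k * B j l * (B i l * B j k)) + 4 * (B i l * B i l * (B j k * B j k))) :=
        Finset.sum_congr rfl fun i _ => Finset.sum_congr rfl fun j _ =>
          Finset.sum_congr rfl fun k _ => Finset.sum_congr rfl fun l _ => hpt i j k l
    _ = 4 * (∑ i, ∑ j, ∑ k, ∑ l, B i k * B i k * (B j l * B j l)) -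
          8 * (∑ i, ∑ j, ∑ k, ∑ l, B i k * B j l * (B i l * B j k)) +
          4 * (∑ i, ∑ j, ∑ k, ∑ l, B i l * B i l * (B j k * B j k)) := by
        simp only [Finset.sum_add_distrib, Finset.sum_sub_distrib, ← Finset.mul_sum]
    _ = 8 * ((∑ i, ∑ j, B i j * B i j) ^ 2 - ∑ i, ∑ j, matSq B i j * matSq B i j) := by
        rw [sum4_factor_kl (fun i k => B i k * B i k) (fun j l => B j l * B j l),
          sum4_factor_lk (fun i l => B i l * B i l) (fun j k => B j k * B j k),
          sum4_cross B, hQ]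
        ring

/-- The traceless-Ricci part `V` of the decomposition of `B⊼B`. -/
noncomputable def Vpart {n : ℕ} (B : Fin n → Fin n → ℝ) : Fin n → Fin n → Fin n → Fin n → ℝ :=
  fun i j k l =>
    -(2 / ((n : ℝ) - 2)) * KN (matSq B) (delta n) i j k l +
      (2 / ((n : ℝ) * ((n : ℝ) - 2))) * normSq2 B * KN (delta n) (delta n) i j k l

/-- The scalar part `U` of the decomposition of `B⊼B`. -/
noncomputable def Upart {n : ℕ} (B : Fin n → Fin n → ℝ) : Fin n → Fin n → Fin n → Fin n → ℝ :=
  fun i j k l =>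
    -(1 / ((n : ℝ) * ((n : ℝ) - 1))) * normSq2 B * KN (delta n) (delta n) i j k l

/-- The totally trace-free part `T` of the decomposition of `B⊼B`. -/
noncomputable def Tpart {n : ℕ} (B : Fin n → Fin n → ℝ) : Fin n → Fin n → Fin n → Fin n → ℝ :=
  fun i j k l => KN B B i j k l - Vpart B i j k l - Upart B i j k l

set_option maxHeartbeats 2000000 in
theorem normSq_T_plus_half_n_normSq_V (n : ℕ) (hn : 3 ≤ n)
    (B : Fin n → Fin n → ℝ)
    (hBsymm : ∀ i j, B i j = B j i)
    (hBtr : ∑ i, B i i = 0) :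
    normSq4 (Tpart B) + ((n : ℝ) / 2) * normSq4 (Vpart B) =
      (8 * ((n : ℝ) - 2) / ((n : ℝ) - 1)) * (normSq2 B) ^ 2 := by
  have hb2 : normSq2 B = ∑ i, ∑ j, B i j * B i j := by
    simp only [normSq2]
    exact Finset.sum_congr rfl fun i _ => Finset.sum_congr rfl fun j _ => by ring
  have htrm : (∑ i, matSq B i i) = ∑ i, ∑ j, B i j * B i j :=
    Finset.sum_congr rfl fun i _ => Finset.sum_congr rfl fun k _ => by rw [hBsymm k i]
  have hdm : (∑ i, ∑ j, delta n i j * matSq B i j) = ∑ i, ∑ j, B i j * B i j := by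
    have h1 : ∀ i : Fin n, (∑ j, delta n i j * matSq B i j) = matSq B i i := by
      intro i; simp [delta]
    simp only [h1]
    exact htrm
  have hmd : (∑ i, ∑ j, matSq B i j * delta n i j) = ∑ i, ∑ j, B i j * B i j := by
    have h1 : ∀ i : Fin n, (∑ j, matSq B i j * delta n i j) = matSq B i i := by
      intro i; simp [delta]
    simp only [h1]
    exact htrm
  have hdd : (∑ i, delta n i i) = (n : ℝ) := by simp [delta]
  have hdd2 : (∑ i, ∑ j, delta n i j * delta n i j) = (n : ℝ) := by simp [delta]
  have AWW := lemC B hBsymm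
  have AWX := lemB B (matSq B) hBtr
  have AWY : (∑ i, ∑ j, ∑ k, ∑ l, KN B B i j k l * KN (delta n) (delta n) i j k l) =
      -8 * (∑ i, ∑ j, B i j * B i j) := by
    rw [lemB B (delta n) hBtr, hdm]
  have AXX : (∑ i, ∑ j, ∑ k, ∑ l,
        KN (matSq B) (delta n) i j k l * KN (matSq B) (delta n) i j k l) =
      4 * ((n : ℝ) - 2) * (∑ i, ∑ j, matSq B i j * matSq B i j) +
        4 * (∑ i, ∑ j, B i j * B i j) * (∑ i, ∑ j, B i j * B i j) := by
    rw [lemA (matSq B) (matSq B), htrm]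
  have AXY : (∑ i, ∑ j, ∑ k, ∑ l,
        KN (matSq B) (delta n) i j k l * KN (delta n) (delta n) i j k l) =
      4 * ((n : ℝ) - 2) * (∑ i, ∑ j, B i j * B i j) +
        4 * (∑ i, ∑ j, B i j * B i j) * (n : ℝ) := by
    rw [lemA (matSq B) (delta n), hmd, htrm, hdd]
  have AYY : (∑ i, ∑ j, ∑ k, ∑ l,
        KN (delta n) (delta n) i j k l * KN (delta n) (delta n) i j k l) =
      4 * ((n : ℝ) - 2) * (n : ℝ) + 4 * (n : ℝ) * (n : ℝ) := by
    rw [lemA (delta n) (delta n), hdd2, hdd]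
  have hTpt : ∀ i j k l : Fin n, Tpart B i j k l ^ 2 =
      KN B B i j k l * KN B B i j k l +
        (2 * (2 / ((n : ℝ) - 2))) * (KN B B i j k l * KN (matSq B) (delta n) i j k l) -
        (2 * (2 / ((n : ℝ) * ((n : ℝ) - 2)) * normSq2 B -
            1 / ((n : ℝ) * ((n : ℝ) - 1)) * normSq2 B)) *
          (KN B B i j k l * KN (delta n) (delta n) i j k l) +
        (2 / ((n : ℝ) - 2)) ^ 2 *
          (KN (matSq B) (delta n) i j k l * KN (matSq B) (delta n) i j k l) -
        (2 * (2 / ((n : ℝ) - 2)) * (2 / ((n : ℝ) * ((n : ℝ) - 2)) * normSq2 B -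
            1 / ((n : ℝ) * ((n : ℝ) - 1)) * normSq2 B)) *
          (KN (matSq B) (delta n) i j k l * KN (delta n) (delta n) i j k l) +
        (2 / ((n : ℝ) * ((n : ℝ) - 2)) * normSq2 B -
            1 / ((n : ℝ) * ((n : ℝ) - 1)) * normSq2 B) ^ 2 *
          (KN (delta n) (delta n) i j k l * KN (delta n) (delta n) i j k l) := by
    intro i j k l
    simp only [Tpart, Vpart, Upart]
    ring
  have hVpt : ∀ i j k l : Fin n, Vpart B i j k l ^ 2 =
      (2 / ((n : ℝ) - 2)) ^ 2 *
          (KN (matSq B) (delta n) i j k l * KN (matSq B) (delta n) i j k l) -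
        (2 * (2 / ((n : ℝ) - 2)) * (2 / ((n : ℝ) * ((n : ℝ) - 2)) * normSq2 B)) *
          (KN (matSq B) (delta n) i j k l * KN (delta n) (delta n) i j k l) +
        (2 / ((n : ℝ) * ((n : ℝ) - 2)) * normSq2 B) ^ 2 *
          (KN (delta n) (delta n) i j k l * KN (delta n) (delta n) i j k l) := by
    intro i j k l
    simp only [Vpart]
    ring
  have hTexp : normSq4 (Tpart B) =
      (∑ i, ∑ j, ∑ k, ∑ l, KN B B i j k l * KN B B i j k l) +
        (2 * (2 / ((n : ℝ) - 2))) *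
          (∑ i, ∑ j, ∑ k, ∑ l, KN B B i j k l * KN (matSq B) (delta n) i j k l) -
        (2 * (2 / ((n : ℝ) * ((n : ℝ) - 2)) * normSq2 B -
            1 / ((n : ℝ) * ((n : ℝ) - 1)) * normSq2 B)) *
          (∑ i, ∑ j, ∑ k, ∑ l, KN B B i j k l * KN (delta n) (delta n) i j k l) +
        (2 / ((n : ℝ) - 2)) ^ 2 *
          (∑ i, ∑ j, ∑ k, ∑ l,
            KN (matSq B) (delta n) i j k l * KN (matSq B) (delta n) i j k l) -
        (2 * (2 / ((n : ℝ) - 2)) * (2 / ((n : ℝ) * ((n : ℝ) - 2)) * normSq2 B -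
            1 / ((n : ℝ) * ((n : ℝ) - 1)) * normSq2 B)) *
          (∑ i, ∑ j, ∑ k, ∑ l,
            KN (matSq B) (delta n) i j k l * KN (delta n) (delta n) i j k l) +
        (2 / ((n : ℝ) * ((n : ℝ) - 2)) * normSq2 B -
            1 / ((n : ℝ) * ((n : ℝ) - 1)) * normSq2 B) ^ 2 *
          (∑ i, ∑ j, ∑ k, ∑ l,
            KN (delta n) (delta n) i j k l * KN (delta n) (delta n) i j k l) := by
    simp only [normSq4]
    rw [show (∑ i, ∑ j, ∑ k, ∑ l, Tpart B i j k l ^ 2) =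
        ∑ i : Fin n, ∑ j : Fin n, ∑ k : Fin n, ∑ l : Fin n,
          (KN B B i j k l * KN B B i j k l +
            (2 * (2 / ((n : ℝ) - 2))) * (KN B B i j k l * KN (matSq B) (delta n) i j k l) -
            (2 * (2 / ((n : ℝ) * ((n : ℝ) - 2)) * normSq2 B -
                1 / ((n : ℝ) * ((n : ℝ) - 1)) * normSq2 B)) *
              (KN B B i j k l * KN (delta n) (delta n) i j k l) +
            (2 / ((n : ℝ) - 2)) ^ 2 *
              (KN (matSq B) (delta n) i j k l * KN (matSq B) (delta n) i j k l) -
            (2 * (2 / ((n : ℝ) - 2)) * (2 / ((n : ℝ) * ((n : ℝ) - 2)) * normSq2 B -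
                1 / ((n : ℝ) * ((n : ℝ) - 1)) * normSq2 B)) *
              (KN (matSq B) (delta n) i j k l * KN (delta n) (delta n) i j k l) +
            (2 / ((n : ℝ) * ((n : ℝ) - 2)) * normSq2 B -
                1 / ((n : ℝ) * ((n : ℝ) - 1)) * normSq2 B) ^ 2 *
              (KN (delta n) (delta n) i j k l * KN (delta n) (delta n) i j k l)) from
      Finset.sum_congr rfl fun i _ => Finset.sum_congr rfl fun j _ =>
        Finset.sum_congr rfl fun k _ => Finset.sum_congr rfl fun l _ => hTpt i j k l]
    simp only [Finset.sum_add_distrib, Finset.sum_sub_distrib, ← Finset.mul_sum]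
  have hVexp : normSq4 (Vpart B) =
      (2 / ((n : ℝ) - 2)) ^ 2 *
          (∑ i, ∑ j, ∑ k, ∑ l,
            KN (matSq B) (delta n) i j k l * KN (matSq B) (delta n) i j k l) -
        (2 * (2 / ((n : ℝ) - 2)) * (2 / ((n : ℝ) * ((n : ℝ) - 2)) * normSq2 B)) *
          (∑ i, ∑ j, ∑ k, ∑ l,
            KN (matSq B) (delta n) i j k l * KN (delta n) (delta n) i j k l) +
        (2 / ((n : ℝ) * ((n : ℝ) - 2)) * normSq2 B) ^ 2 *
          (∑ i, ∑ j, ∑ k, ∑ l,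
            KN (delta n) (delta n) i j k l * KN (delta n) (delta n) i j k l) := by
    simp only [normSq4]
    rw [show (∑ i, ∑ j, ∑ k, ∑ l, Vpart B i j k l ^ 2) =
        ∑ i : Fin n, ∑ j : Fin n, ∑ k : Fin n, ∑ l : Fin n,
          ((2 / ((n : ℝ) - 2)) ^ 2 *
              (KN (matSq B) (delta n) i j k l * KN (matSq B) (delta n) i j k l) -
            (2 * (2 / ((n : ℝ) - 2)) * (2 / ((n : ℝ) * ((n : ℝ) - 2)) * normSq2 B)) *
              (KN (matSq B) (delta n) i j k l * KN (delta n) (delta n) i j k l) +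
            (2 / ((n : ℝ) * ((n : ℝ) - 2)) * normSq2 B) ^ 2 *
              (KN (delta n) (delta n) i j k l * KN (delta n) (delta n) i j k l)) from
      Finset.sum_congr rfl fun i _ => Finset.sum_congr rfl fun j _ =>
        Finset.sum_congr rfl fun k _ => Finset.sum_congr rfl fun l _ => hVpt i j k l]
    simp only [Finset.sum_add_distrib, Finset.sum_sub_distrib, ← Finset.mul_sum]
  rw [hTexp, hVexp, AWW, AWX, AWY, AXX, AXY, AYY, hb2]
  have hn3 : (3 : ℝ) ≤ (n : ℝ) := by exact_mod_cast hn
  have h0 : (n : ℝ) ≠ 0 := by linarith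
  have h1 : (n : ℝ) - 1 ≠ 0 := by intro h; nlinarith [h]
  have h2 : (n : ℝ) - 2 ≠ 0 := by intro h; nlinarith [h]
  field_simp
  ring
end

section
/- Let n ≥ 3, let W be a 4-tensor on ℝⁿ satisfying W_{ijkl} = −W_{ijlk}, and let B be a symmetric trace-free n×n real matrix (tr B = 0). Then (n/(n−2)) Σ_{i,j,k} B_{ij} B_{jk} B_{ik} − Σ_{i,j,k,l} W_{ijkl} B_{ik} B_{jl} = −(1/4) Σ_{i,j,k,l} (W + (n/(2(n−2))) B⊼δ)_{ijkl} (B⊼B)_{ijkl}. -/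
open Finset

theorem auxid_identity (n : ℕ) (hn : 3 ≤ n)
    (W : Fin n → Fin n → Fin n → Fin n → ℝ)
    (hanti : ∀ i j k l, W i j k l = -W i j l k)
    (B : Fin n → Fin n → ℝ)
    (hBsymm : ∀ i j, B i j = B j i)
    (hBtr : ∑ i, B i i = 0) :
    ((n : ℝ) / ((n : ℝ) - 2)) * (∑ i, ∑ j, ∑ k, B i j * B j k * B i k) -
        (∑ i, ∑ j, ∑ k, ∑ l, W i j k l * B i k * B j l) =
      -(1 / 4) * ∑ i, ∑ j, ∑ k, ∑ l,
        (W i j k l + ((n : ℝ) / (2 * ((n : ℝ) - 2))) * KN B (delta n) i j k l) *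
          KN B B i j k l := by
  have h2 : ((n : ℝ) - 2) ≠ 0 := by
    have : (3 : ℝ) ≤ (n : ℝ) := by exact_mod_cast hn
    linarith
  -- zero lemmas from trace-freeness
  have z_mid : ∀ f : Fin n → Fin n → ℝ,
      (∑ i, ∑ j, ∑ k, f i k * B j j) = 0 := by
    intro f
    have h : ∀ i : Fin n, (∑ j, ∑ k, f i k * B j j) = 0 := by
      intro i
      have e : (∑ j, ∑ k, f i k * B j j) = ∑ j, (∑ k, f i k) * B j j := by
        refine Finset.sum_congr rfl fun j _ => ?_
        rw [Finset.sum_mul]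
      rw [e, ← Finset.mul_sum, hBtr, mul_zero]
    simp [h]
  have z_out : ∀ f : Fin n → Fin n → ℝ,
      (∑ i, ∑ j, ∑ k, B i i * f j k) = 0 := by
    intro f
    have e : (∑ i, ∑ j, ∑ k, B i i * f j k) = ∑ i, B i i * (∑ j, ∑ k, f j k) := by
      refine Finset.sum_congr rfl fun i _ => ?_
      rw [Finset.mul_sum]
      refine Finset.sum_congr rfl fun j _ => ?_
      rw [Finset.mul_sum]
    rw [e, ← Finset.sum_mul, hBtr, zero_mul]
  -- Step 1 : the W part
  have hWQ : (∑ i, ∑ j, ∑ k, ∑ l, W i j k l * KN B B i j k l)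
      = 4 * (∑ i, ∑ j, ∑ k, ∑ l, W i j k l * B i k * B j l) := by
    have hswap : ∀ i j : Fin n,
        (∑ k, ∑ l, W i j k l * (B i l * B j k))
          = ∑ k, ∑ l, -(W i j k l * (B i k * B j l)) := by
      intro i j
      rw [Finset.sum_comm]
      refine Finset.sum_congr rfl fun a _ => Finset.sum_congr rfl fun b _ => ?_
      rw [hanti i j a b]
      ring
    have expand : ∀ i j : Fin n,
        (∑ k, ∑ l, W i j k l * KN B B i j k l)
          = (∑ k, ∑ l, (2 * (W i j k l * (B i k * B j l))
              - 2 * (W i j k l * (B i l * B j k)))) := by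
      intro i j
      refine Finset.sum_congr rfl fun k _ => Finset.sum_congr rfl fun l _ => ?_
      simp only [KN]; ring
    calc (∑ i, ∑ j, ∑ k, ∑ l, W i j k l * KN B B i j k l)
        = ∑ i, ∑ j, (2 * (∑ k, ∑ l, W i j k l * (B i k * B j l))
            - 2 * (∑ k, ∑ l, W i j k l * (B i l * B j k))) := by
          refine Finset.sum_congr rfl fun i _ => Finset.sum_congr rfl fun j _ => ?_
          rw [expand i j]
          simp [Finset.sum_sub_distrib, Finset.mul_sum]
      _ = ∑ i, ∑ j, 4 * (∑ k, ∑ l, W i j k l * (B i k * B j l)) := by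
          refine Finset.sum_congr rfl fun i _ => Finset.sum_congr rfl fun j _ => ?_
          rw [hswap i j]
          simp only [Finset.sum_neg_distrib]
          ring
      _ = 4 * (∑ i, ∑ j, ∑ k, ∑ l, W i j k l * B i k * B j l) := by
          rw [Finset.mul_sum]
          refine Finset.sum_congr rfl fun i _ => ?_
          rw [Finset.mul_sum]
          refine Finset.sum_congr rfl fun j _ => ?_
          congr 1
          refine Finset.sum_congr rfl fun k _ => Finset.sum_congr rfl fun l _ => ?_
          ring
  -- Step 2 : the Kulkarni–Nomizu with delta part
  have hKQ : (∑ i, ∑ j, ∑ k, ∑ l, KN B (delta n) i j k l * KN B B i j k l)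
      = -8 * (∑ i, ∑ j, ∑ k, B i j * B j k * B i k) := by
    have c_jl : ∀ g : Fin n → Fin n → Fin n → Fin n → ℝ,
        (∑ i, ∑ j, ∑ k, ∑ l, delta n j l * g i j k l) = ∑ i, ∑ j, ∑ k, g i j k j := by
      intro g
      refine Finset.sum_congr rfl fun i _ => Finset.sum_congr rfl fun j _ =>
        Finset.sum_congr rfl fun k _ => ?_
      simp [delta, ite_mul, Finset.sum_ite_eq]
    have c_il : ∀ g : Fin n → Fin n → Fin n → Fin n → ℝ,
        (∑ i, ∑ j, ∑ k, ∑ l, delta n i l * g i j k l) = ∑ i, ∑ j, ∑ k, g i j k i := by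
      intro g
      refine Finset.sum_congr rfl fun i _ => Finset.sum_congr rfl fun j _ =>
        Finset.sum_congr rfl fun k _ => ?_
      simp [delta, ite_mul, Finset.sum_ite_eq]
    have c_ik : ∀ g : Fin n → Fin n → Fin n → Fin n → ℝ,
        (∑ i, ∑ j, ∑ k, ∑ l, delta n i k * g i j k l) = ∑ i, ∑ j, ∑ k, g i j i k := by
      intro g
      refine Finset.sum_congr rfl fun i _ => Finset.sum_congr rfl fun j _ => ?_
      rw [Finset.sum_comm]
      simp [delta, ite_mul, Finset.sum_ite_eq]
    have c_jk : ∀ g : Fin n → Fin n → Fin n → Fin n → ℝ,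
        (∑ i, ∑ j, ∑ k, ∑ l, delta n j k * g i j k l) = ∑ i, ∑ j, ∑ k, g i j j k := by
      intro g
      refine Finset.sum_congr rfl fun i _ => Finset.sum_congr rfl fun j _ => ?_
      rw [Finset.sum_comm]
      simp [delta, ite_mul, Finset.sum_ite_eq]
    have pw : ∀ i j k l : Fin n,
        KN B (delta n) i j k l * KN B B i j k l
          = delta n j l * (B i k * KN B B i j k l)
            + delta n i k * (B j l * KN B B i j k l)
            - delta n j k * (B i l * KN B B i j k l)
            - delta n i l * (B j k * KN B B i j k l) := by
      intro i j k l
      simp only [KN]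
      ring
    have split : (∑ i, ∑ j, ∑ k, ∑ l, KN B (delta n) i j k l * KN B B i j k l)
        = (∑ i, ∑ j, ∑ k, ∑ l, delta n j l * (B i k * KN B B i j k l))
          + (∑ i, ∑ j, ∑ k, ∑ l, delta n i k * (B j l * KN B B i j k l))
          - (∑ i, ∑ j, ∑ k, ∑ l, delta n j k * (B i l * KN B B i j k l))
          - (∑ i, ∑ j, ∑ k, ∑ l, delta n i l * (B j k * KN B B i j k l)) := by
      simp only [pw, Finset.sum_add_distrib, Finset.sum_sub_distrib]
    rw [split, c_jl (fun i j k l => B i k * KN B B i j k l),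
      c_ik (fun i j k l => B j l * KN B B i j k l),
      c_jk (fun i j k l => B i l * KN B B i j k l),
      c_il (fun i j k l => B j k * KN B B i j k l)]
    have t1 : (∑ i, ∑ j, ∑ k, B i k * KN B B i j k j)
        = -2 * (∑ i, ∑ j, ∑ k, B i j * B j k * B i k) := by
      have e : ∀ i j k : Fin n, B i k * KN B B i j k j
          = (2 * (B i k * B i k)) * B j j - 2 * (B i j * B j k * B i k) := by
        intro i j k; simp only [KN]; ring
      simp only [e, Finset.sum_sub_distrib]
      rw [z_mid (fun i k => 2 * (B i k * B i k))]
      simp only [← Finset.mul_sum]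
      ring
    have t2 : (∑ i, ∑ j, ∑ k, B j k * KN B B i j i k)
        = -2 * (∑ i, ∑ j, ∑ k, B i j * B j k * B i k) := by
      have e : ∀ i j k : Fin n, B j k * KN B B i j i k
          = B i i * (2 * (B j k * B j k)) - 2 * (B i j * B j k * B i k) := by
        intro i j k; simp only [KN]; rw [hBsymm j i]; ring
      simp only [e, Finset.sum_sub_distrib]
      rw [z_out (fun j k => 2 * (B j k * B j k))]
      simp only [← Finset.mul_sum]
      ring
    have t3 : (∑ i, ∑ j, ∑ k, B i k * KN B B i j j k)
        = 2 * (∑ i, ∑ j, ∑ k, B i j * B j k * B i k) := by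
      have e : ∀ i j k : Fin n, B i k * KN B B i j j k
          = 2 * (B i j * B j k * B i k) - (2 * (B i k * B i k)) * B j j := by
        intro i j k; simp only [KN]; ring
      simp only [e, Finset.sum_sub_distrib]
      rw [z_mid (fun i k => 2 * (B i k * B i k))]
      simp only [← Finset.mul_sum]
      ring
    have t4 : (∑ i, ∑ j, ∑ k, B j k * KN B B i j k i)
        = 2 * (∑ i, ∑ j, ∑ k, B i j * B j k * B i k) := by
      have e : ∀ i j k : Fin n, B j k * KN B B i j k i
          = 2 * (B i j * B j k * B i k) - B i i * (2 * (B j k * B j k)) := by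
        intro i j k; simp only [KN]; rw [hBsymm j i]; ring
      simp only [e, Finset.sum_sub_distrib]
      rw [z_out (fun j k => 2 * (B j k * B j k))]
      simp only [← Finset.mul_sum]
      ring
    rw [t1, t2, t3, t4]
    ring
  -- put everything together
  have hsplit : (∑ i, ∑ j, ∑ k, ∑ l,
      (W i j k l + ((n : ℝ) / (2 * ((n : ℝ) - 2))) * KN B (delta n) i j k l) *
        KN B B i j k l)
      = (∑ i, ∑ j, ∑ k, ∑ l, W i j k l * KN B B i j k l)
        + ((n : ℝ) / (2 * ((n : ℝ) - 2))) *
          (∑ i, ∑ j, ∑ k, ∑ l, KN B (delta n) i j k l * KN B B i j k l) := by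
    simp only [add_mul, Finset.sum_add_distrib, mul_assoc, ← Finset.mul_sum]
  rw [hsplit, hWQ, hKQ]
  field_simp
  ring
end

section
/- Let n ≥ 3, let W be a 4-tensor on ℝⁿ satisfying W_{ijkl} = −W_{jikl} = −W_{ijlk}, W_{ijkl} = W_{klij}, and Σ_i W_{ijil} = 0 for all j, l. Let S be a symmetric n×n real matrix with tr S = R, let B := S − (R/n) δ be its trace-free part, let A := (1/(n−2)) (S − (R/(2(n−1))) δ), and let Rm := W + A⊼δ, where δ is the n×n identity matrix. Then Σ_{i,j,k} S_{ij} S_{ik} S_{jk} − Σ_{i,j,k,l} Rm_{ijkl} S_{ik} S_{jl} = (R/(n−1)) |B|² + (n/(n−2)) Σ_{i,j,k} B_{ij} B_{jk} B_{ik} − Σ_{i,j,k,l} W_{ijkl} B_{ik} B_{jl}, where |B|² := Σ_{i,j} B_{ij}². -/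
open Finset

lemma sum_if_pull {α : Type*} [Fintype α] (c : Prop) [Decidable c] (f : α → ℝ) :
    (∑ k : α, if c then f k else 0) = if c then ∑ k : α, f k else 0 := by
  split <;> simp

lemma trace_first {n : ℕ} (f : Fin n → ℝ) (g : Fin n → Fin n → ℝ) :
    ∑ i, ∑ j, ∑ k, f i * g j k = (∑ i, f i) * ∑ j, ∑ k, g j k := by
  simp only [← Finset.mul_sum]
  rw [← Finset.sum_mul]

lemma trace_mid {n : ℕ} (f : Fin n → ℝ) (g : Fin n → Fin n → ℝ) :
    ∑ i, ∑ j, ∑ k, g i k * f j = (∑ j, f j) * ∑ i, ∑ k, g i k := by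
  have h : ∀ i : Fin n, ∑ j, ∑ k, g i k * f j = ∑ k, ∑ j, g i k * f j :=
    fun i => Finset.sum_comm
  simp only [h, ← Finset.mul_sum]
  simp only [← Finset.sum_mul]
  rw [mul_comm]

theorem ricci_cubic_decomposition (n : ℕ) (hn : 3 ≤ n)
    (W : Fin n → Fin n → Fin n → Fin n → ℝ)
    (hanti1 : ∀ i j k l, W i j k l = -W j i k l)
    (hanti2 : ∀ i j k l, W i j k l = -W i j l k)
    (hpair : ∀ i j k l, W i j k l = W k l i j)
    (htrfree : ∀ j l, ∑ i, W i j i l = 0)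
    (S : Fin n → Fin n → ℝ) (hSsymm : ∀ i j, S i j = S j i)
    (R : ℝ) (htr : ∑ i, S i i = R)
    (B : Fin n → Fin n → ℝ) (hB : ∀ i j, B i j = S i j - R / (n : ℝ) * delta n i j)
    (A : Fin n → Fin n → ℝ)
    (hA : ∀ i j, A i j = (1 / ((n : ℝ) - 2)) * (S i j - R / (2 * ((n : ℝ) - 1)) * delta n i j))
    (Rm : Fin n → Fin n → Fin n → Fin n → ℝ)
    (hRm : ∀ i j k l, Rm i j k l = W i j k l + KN A (delta n) i j k l) :
    (∑ i, ∑ j, ∑ k, S i j * S i k * S j k) -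
        (∑ i, ∑ j, ∑ k, ∑ l, Rm i j k l * S i k * S j l) =
      (R / ((n : ℝ) - 1)) * (∑ i, ∑ j, B i j ^ 2) +
        ((n : ℝ) / ((n : ℝ) - 2)) * (∑ i, ∑ j, ∑ k, B i j * B j k * B i k) -
        ∑ i, ∑ j, ∑ k, ∑ l, W i j k l * B i k * B j l := by
  have hn' : (3:ℝ) ≤ (n:ℝ) := by exact_mod_cast hn
  have hn0 : (n:ℝ) ≠ 0 := by intro h; rw [h] at hn'; norm_num at hn'
  have hn1 : (n:ℝ) - 1 ≠ 0 := by
    intro h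
    have h' : (n:ℝ) = 1 := by linarith
    linarith
  have hn2 : (n:ℝ) - 2 ≠ 0 := by
    intro h
    have h' : (n:ℝ) = 2 := by linarith
    linarith
  have hW2 : ∀ i k, ∑ j, W i j k j = 0 := by
    intro i k
    have e : ∀ j, W i j k j = W j i j k := by
      intro j; rw [hanti1 i j k j, hanti2 j i k j, neg_neg]
    simp only [e]
    exact htrfree i k
  have hsy : ∑ i, ∑ j, S i j * S j i = ∑ i, ∑ j, S i j * S i j :=
    Finset.sum_congr rfl fun i _ => Finset.sum_congr rfl fun j _ => by rw [hSsymm j i]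
  -- (1) square of B
  have ptB : ∀ i j, B i j ^ 2 =
      S i j * S i j - (if i = j then 2*(R/(n:ℝ))*S i j - (R/(n:ℝ))^2 else 0) := by
    intro i j; rw [hB]; simp only [delta]; split_ifs <;> ring
  have hBsq : ∑ i, ∑ j, B i j ^ 2 =
      (∑ i, ∑ j, S i j * S i j) - (2*(R/(n:ℝ))*R - (R/(n:ℝ))^2 * n) := by
    simp only [ptB, Finset.sum_sub_distrib, Finset.sum_ite_eq, Finset.mem_univ, if_true,
      Finset.sum_const, Finset.card_univ, Fintype.card_fin, nsmul_eq_mul]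
    rw [← Finset.mul_sum, htr]
    ring
  -- (2) cube of B
  have ptC : ∀ i j k, B i j * B j k * B i k =
      S i j * S i k * S j k
      - (if i = j then R/(n:ℝ) * (S j k * S i k) else 0)
      - (if j = k then R/(n:ℝ) * (S i j * S i k) else 0)
      - (if i = k then R/(n:ℝ) * (S i j * S j k) else 0)
      + (if i = j then (if j = k then (R/(n:ℝ))^2 * S i k else 0) else 0)
      + (if i = j then (if i = k then (R/(n:ℝ))^2 * S j k else 0) else 0)
      + (if j = k then (if i = k then (R/(n:ℝ))^2 * S i j else 0) else 0)
      - (if i = j then (if j = k then (R/(n:ℝ))^3 else 0) else 0) := by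
    intro i j k
    simp only [hB, delta]
    split_ifs with h1 h2 h3 <;>
      first
        | ring1
        | exact absurd (h1.trans h2) h3
        | exact absurd (h1.symm.trans h3) h2
        | exact absurd (h3.trans h2.symm) h1
  have hBcube : ∑ i, ∑ j, ∑ k, B i j * B j k * B i k =
      (∑ i, ∑ j, ∑ k, S i j * S i k * S j k)
        - 3*(R/(n:ℝ))*(∑ i, ∑ j, S i j * S i j) + 3*(R/(n:ℝ))^2*R - (R/(n:ℝ))^3*n := by
    simp only [ptC, Finset.sum_sub_distrib, Finset.sum_add_distrib]
    simp only [sum_if_pull]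
    simp only [Finset.sum_ite_eq, Finset.mem_univ, if_true, Finset.sum_const, Finset.card_univ,
      Fintype.card_fin, nsmul_eq_mul]
    simp only [← Finset.mul_sum, htr]
    rw [hsy]
    ring
  -- (3) W contracted with B equals W contracted with S
  have ptW : ∀ i j k l, W i j k l * B i k * B j l =
      W i j k l * S i k * S j l
      - (if j = l then R/(n:ℝ) * (W i j k l * S i k) else 0)
      - (if i = k then R/(n:ℝ) * (W i j k l * S j l) else 0)
      + (if i = k then (if j = l then (R/(n:ℝ))^2 * W i j k l else 0) else 0) := by
    intro i j k l
    simp only [hB, delta]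
    split_ifs <;> ring1
  have hX : ∀ i : Fin n, ∑ j, ∑ k, R/(n:ℝ) * (W i j k j * S i k) = 0 := by
    intro i
    rw [Finset.sum_comm]
    refine Finset.sum_eq_zero fun k _ => ?_
    have e : ∑ j, R/(n:ℝ) * (W i j k j * S i k) = (∑ j, W i j k j) * (R/(n:ℝ) * S i k) := by
      rw [Finset.sum_mul]
      exact Finset.sum_congr rfl fun j _ => by ring
    rw [e, hW2, zero_mul]
  have hY : ∑ i, ∑ j, ∑ l, R/(n:ℝ) * (W i j i l * S j l) = 0 := by
    rw [Finset.sum_comm]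
    refine Finset.sum_eq_zero fun j _ => ?_
    rw [Finset.sum_comm]
    refine Finset.sum_eq_zero fun l _ => ?_
    have e : ∑ i, R/(n:ℝ) * (W i j i l * S j l) = (∑ i, W i j i l) * (R/(n:ℝ) * S j l) := by
      rw [Finset.sum_mul]
      exact Finset.sum_congr rfl fun i _ => by ring
    rw [e, htrfree, zero_mul]
  have hZ : ∑ i, ∑ j, (R/(n:ℝ))^2 * W i j i j = 0 := by
    rw [Finset.sum_comm]
    refine Finset.sum_eq_zero fun j _ => ?_
    rw [← Finset.mul_sum, htrfree, mul_zero]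
  have hWB : ∑ i, ∑ j, ∑ k, ∑ l, W i j k l * B i k * B j l =
      ∑ i, ∑ j, ∑ k, ∑ l, W i j k l * S i k * S j l := by
    simp only [ptW, Finset.sum_sub_distrib, Finset.sum_add_distrib]
    simp only [sum_if_pull]
    simp only [Finset.sum_ite_eq, Finset.mem_univ, if_true]
    rw [Finset.sum_congr rfl fun i _ => hX i, hY, hZ, Finset.sum_const, smul_zero]
    ring
  -- (4) Kulkarni–Nomizu contraction
  have ptK : ∀ i j k l, KN A (delta n) i j k l * S i k * S j l =
      (if j = l then A i k * S i k * S j l else 0)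
      + (if i = k then A j l * S i k * S j l else 0)
      - (if j = k then A i l * S i k * S j l else 0)
      - (if i = l then A j k * S i k * S j l else 0) := by
    intro i j k l
    simp only [KN, delta]
    split_ifs <;> ring1
  have e1 : ∑ i, ∑ j, ∑ k, A i k * S i k * S j j = R * ∑ i, ∑ k, A i k * S i k := by
    have := trace_mid (n := n) (fun j => S j j) (fun i k => A i k * S i k)
    simpa only [htr] using this
  have e2 : ∑ i, ∑ j, ∑ l, A j l * S i i * S j l = R * ∑ i, ∑ k, A i k * S i k := by
    have step : ∑ i, ∑ j, ∑ l, A j l * S i i * S j l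
        = ∑ i, ∑ j, ∑ l, S i i * (A j l * S j l) :=
      Finset.sum_congr rfl fun i _ => Finset.sum_congr rfl fun j _ =>
        Finset.sum_congr rfl fun l _ => by ring
    rw [step]
    have := trace_first (n := n) (fun i => S i i) (fun j l => A j l * S j l)
    simpa only [htr] using this
  have e4 : ∑ i, ∑ j, ∑ k, A j k * S i k * S j i = ∑ i, ∑ j, ∑ k, A i k * S i j * S j k := by
    rw [Finset.sum_comm]
    exact Finset.sum_congr rfl fun a _ => Finset.sum_congr rfl fun b _ =>
      Finset.sum_congr rfl fun k _ => by ring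
  have hKN : ∑ i, ∑ j, ∑ k, ∑ l, KN A (delta n) i j k l * S i k * S j l =
      2 * R * (∑ i, ∑ k, A i k * S i k) - 2 * (∑ i, ∑ j, ∑ k, A i k * S i j * S j k) := by
    simp only [ptK, Finset.sum_add_distrib, Finset.sum_sub_distrib]
    simp only [sum_if_pull]
    simp only [Finset.sum_ite_eq, Finset.mem_univ, if_true]
    rw [e1, e2, e4]
    ring
  -- (5) A contracted with S
  have ptA : ∀ i k, A i k * S i k = 1/((n:ℝ)-2) * (S i k * S i k)
      - (if i = k then 1/((n:ℝ)-2) * (R/(2*((n:ℝ)-1))) * S i k else 0) := by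
    intro i k
    rw [hA]
    simp only [delta]
    split_ifs <;> ring1
  have hAS : ∑ i, ∑ k, A i k * S i k =
      1/((n:ℝ)-2) * ((∑ i, ∑ j, S i j * S i j) - R/(2*((n:ℝ)-1)) * R) := by
    simp only [ptA, Finset.sum_sub_distrib, Finset.sum_ite_eq, Finset.mem_univ, if_true]
    simp only [← Finset.mul_sum, htr]
    ring
  -- (6) A-S-S triple contraction
  have ptA2 : ∀ i j k, A i k * S i j * S j k = 1/((n:ℝ)-2) * (S i j * S i k * S j k)
      - (if i = k then 1/((n:ℝ)-2) * (R/(2*((n:ℝ)-1))) * (S i j * S j k) else 0) := by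
    intro i j k
    rw [hA]
    simp only [delta]
    split_ifs <;> ring1
  have hASS : ∑ i, ∑ j, ∑ k, A i k * S i j * S j k =
      1/((n:ℝ)-2) * ((∑ i, ∑ j, ∑ k, S i j * S i k * S j k)
        - R/(2*((n:ℝ)-1)) * (∑ i, ∑ j, S i j * S i j)) := by
    simp only [ptA2, Finset.sum_sub_distrib]
    simp only [Finset.sum_ite_eq, Finset.mem_univ, if_true]
    simp only [← Finset.mul_sum]
    rw [hsy]
    ring
  -- finale
  have hRmS : ∑ i, ∑ j, ∑ k, ∑ l, Rm i j k l * S i k * S j l =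
      (∑ i, ∑ j, ∑ k, ∑ l, W i j k l * S i k * S j l)
      + (2 * R * (∑ i, ∑ k, A i k * S i k) - 2 * (∑ i, ∑ j, ∑ k, A i k * S i j * S j k)) := by
    simp only [hRm, add_mul, Finset.sum_add_distrib, hKN]
  rw [hRmS, hWB, hBsq, hBcube, hAS, hASS]
  field_simp
  ring
end
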